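/- Let σ = (Z,P) be a stability condition on a triangulated category D. Let T : ℝ² → ℝ² be an orientation-preserving linear isomorphism (identifying ℂ with ℝ²) and f : ℝ → ℝ an increasing map with f(φ+1) = f(φ)+1, such that for every φ ∈ ℝ the map T carries the ray ℝ_{>0}·exp(iπφ) onto the ray ℝ_{>0}·exp(iπ f(φ)). Define Z' = T^{-1} ∘ Z and P'(φ) = P(f(φ)) for all φ ∈ ℝ. Then σ' = (Z',P') is a stability condition on D, and the semistable objects of σ' are exactly the semistable objects of σ (only their phases are relabelled). -/

import Mathlib

/-!
STATEMENT 2: the right action of (a lift of an element of) GL⁺(2,ℝ) on stability conditions.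
-/

open CategoryTheory CategoryTheory.Limits CategoryTheory.Pretriangulated

universe v u

variable (C : Type u) [Category.{v} C] [HasZeroObject C] [HasShift C ℤ]
  [Preadditive C] [∀ n : ℤ, (CategoryTheory.shiftFunctor C n).Additive] [Pretriangulated C]

/-- A Harder–Narasimhan decomposition of an object `E` with respect to a collection of
full subcategories `P φ` (`φ : ℝ`). -/
structure HNFiltration (P : ℝ → Set C) (E : C) where
  n : ℕ
  phase : Fin n → ℝ
  phase_strictAnti : StrictAnti phase
  obj : Fin (n + 1) → C
  obj_zero : IsZero (obj 0)
  obj_last : obj (Fin.last n) = E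
  fac : Fin n → C
  fac_mem : ∀ j, fac j ∈ P (phase j)
  fac_nonzero : ∀ j, ¬ IsZero (fac j)
  triangle : ∀ j : Fin n, ∃ (f : obj j.castSucc ⟶ obj j.succ) (g : obj j.succ ⟶ fac j)
      (h : fac j ⟶ (obj j.castSucc)⟦(1 : ℤ)⟧), Triangle.mk f g h ∈ distTriang C

/-- A stability condition `σ = (Z, P)` on a triangulated category `C`. -/
structure StabilityCondition where
  Z : C → ℂ
  P : ℝ → Set C
  additive : ∀ T : Triangle C, (T ∈ distTriang C) → Z T.obj₂ = Z T.obj₁ + Z T.obj₃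
  P_iso : ∀ (φ : ℝ) (A B : C), (A ≅ B) → A ∈ P φ → B ∈ P φ
  P_zero : ∀ (φ : ℝ) (A : C), IsZero A → A ∈ P φ
  central : ∀ (φ : ℝ) (E : C), E ∈ P φ → ¬ IsZero E →
      ∃ m : ℝ, 0 < m ∧ Z E = m * Complex.exp (Real.pi * φ * Complex.I)
  shift : ∀ (φ : ℝ) (E : C), E ∈ P (φ + 1) ↔ E⟦(-1 : ℤ)⟧ ∈ P φ
  hom_zero : ∀ (φ₁ φ₂ : ℝ), φ₂ < φ₁ → ∀ (A B : C), A ∈ P φ₁ → B ∈ P φ₂ →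
      ∀ f : A ⟶ B, f = 0
  HN : ∀ E : C, ¬ IsZero E → Nonempty (HNFiltration C P E)


/-- A nonzero object is semistable in `σ` if it lies in `P φ` for some phase `φ`. -/
def StabilityCondition.IsSemistable (σ : StabilityCondition C) (E : C) : Prop :=
  ¬ IsZero E ∧ ∃ φ : ℝ, E ∈ σ.P φ

/-!
Two phases whose rays agree differ by an element of `2ℤ`, and `f (φ + 2n) = f φ + 2n`. Hence
injectivity of `T` makes `f` injective (so strictly increasing, being monotone), and surjectivity
of `T` makes every phase congruent mod `2` to a value of `f`, so `f` is surjective. Thus `f` is an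
order automorphism of `ℝ` commuting with `+ 1`: the axioms of `σ` transfer to `(T⁻¹ ∘ Z, P ∘ f)`,
the Harder–Narasimhan filtrations of `σ` are relabelled by `f⁻¹`, and `T⁻¹` sends the ray of phase
`f φ` back to the ray of phase `φ`.
-/

open Complex

lemma exists_int_eq_add_two_mul_of_exp_eq {a b c : ℝ} (hc : 0 < c)
    (h : exp (Real.pi * a * I) = c * exp (Real.pi * b * I)) : ∃ n : ℤ, a = b + 2 * n := by
  have norm_exp : ∀ x : ℝ, ‖exp (Real.pi * x * I)‖ = 1 := fun x => by
    simpa using norm_exp_ofReal_mul_I (Real.pi * x)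
  have hc1 : c = 1 := by
    simpa [norm_exp, abs_of_pos hc] using (congrArg (‖·‖) h).symm
  subst hc1
  rw [ofReal_one, one_mul, exp_eq_exp_iff_exists_int] at h
  obtain ⟨n, hn⟩ := h
  refine ⟨n, mul_left_cancel₀ Real.pi_ne_zero ?_⟩
  have hnI : ((Real.pi * a : ℝ) : ℂ) * I = ((Real.pi * (b + 2 * n) : ℝ) : ℂ) * I := by
    push_cast
    rw [hn]
    ring
  exact_mod_cast mul_right_cancel₀ I_ne_zero hnI

lemma exists_pos_eq_mul_exp_pi_mul_I {w : ℂ} (hw : w ≠ 0) :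
    ∃ r φ : ℝ, 0 < r ∧ w = r * exp (Real.pi * φ * I) := by
  refine ⟨‖w‖, w.arg / Real.pi, norm_pos_iff.mpr hw, ?_⟩
  rw [ofReal_div, mul_div_cancel₀ _ (ofReal_ne_zero.mpr Real.pi_ne_zero)]
  exact (norm_mul_exp_arg_mul_I w).symm

def MapsRays (T : ℂ → ℂ) (f : ℝ → ℝ) : Prop :=
  ∀ φ : ℝ, ∃ s : ℝ, 0 < s ∧ T (exp (Real.pi * φ * I)) = s * exp (Real.pi * (f φ) * I)

namespace CircleDeg1Lift

variable {T : ℂ →ₗ[ℝ] ℂ} {f : CircleDeg1Lift}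

lemma map_add_two_mul_int (x : ℝ) (n : ℤ) : f (x + 2 * n) = f x + 2 * n := by
  exact_mod_cast f.map_add_int x (2 * n)

lemma injective_of_mapsRays (hT : Function.Injective T) (hTf : MapsRays T f) :
    Function.Injective f := by
  intro x y hxy
  obtain ⟨s, hs, hx⟩ := hTf x
  obtain ⟨t, ht, hy⟩ := hTf y
  have hray : exp (Real.pi * y * I) = ((t / s : ℝ) : ℂ) * exp (Real.pi * x * I) := by
    apply hT
    rw [← real_smul (x := t / s), map_smul, hx, hy, hxy, real_smul, ofReal_div]
    field_simp [ofReal_ne_zero.mpr hs.ne']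
  obtain ⟨n, hn⟩ := exists_int_eq_add_two_mul_of_exp_eq (div_pos ht hs) hray
  have hn0 : (n : ℝ) = 0 := by
    have := f.map_add_two_mul_int x n
    rw [← hn, hxy] at this
    linarith
  rw [hn, hn0]
  ring

lemma surjective_of_mapsRays (hT : Function.Surjective T) (hTf : MapsRays T f) :
    Function.Surjective f := by
  intro ψ
  obtain ⟨w, hw⟩ := hT (exp (Real.pi * ψ * I))
  have hw0 : w ≠ 0 := by
    rintro rfl
    exact exp_ne_zero _ (hw.symm.trans (map_zero T))
  obtain ⟨r, φ, hr, rfl⟩ := exists_pos_eq_mul_exp_pi_mul_I hw0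
  obtain ⟨s, hs, hφ⟩ := hTf φ
  have hray : exp (Real.pi * ψ * I) = ((r * s : ℝ) : ℂ) * exp (Real.pi * (f φ) * I) := by
    rw [← hw, ← real_smul (x := r), map_smul, hφ, real_smul, ofReal_mul]
    ring
  obtain ⟨n, hn⟩ := exists_int_eq_add_two_mul_of_exp_eq (mul_pos hr hs) hray
  exact ⟨φ + 2 * n, by rw [map_add_two_mul_int, hn]⟩

end CircleDeg1Lift

section

variable {C}

def HNFiltration.comapPhase {P : ℝ → Set C} {E : C} (F : HNFiltration C P E) (g : ℝ ≃o ℝ) :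
    HNFiltration C (fun φ => P (g φ)) E where
  n := F.n
  phase j := g.symm (F.phase j)
  phase_strictAnti := g.symm.strictMono.comp_strictAnti F.phase_strictAnti
  obj := F.obj
  obj_zero := F.obj_zero
  obj_last := F.obj_last
  fac := F.fac
  fac_mem j := by simpa using F.fac_mem j
  fac_nonzero := F.fac_nonzero
  triangle := F.triangle

namespace StabilityCondition

noncomputable def act (σ : StabilityCondition C) (e : ℂ ≃ₗ[ℝ] ℂ) (g : ℝ ≃o ℝ)
    (hg1 : ∀ φ : ℝ, g (φ + 1) = g φ + 1) (heg : MapsRays e g) :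
    StabilityCondition C where
  Z E := e.symm (σ.Z E)
  P φ := σ.P (g φ)
  additive Tr hTr := by rw [σ.additive Tr hTr, map_add]
  P_iso φ := σ.P_iso (g φ)
  P_zero φ := σ.P_zero (g φ)
  central φ E hE hE0 := by
    obtain ⟨m, hm, hZ⟩ := σ.central (g φ) E hE hE0
    obtain ⟨s, hs, he⟩ := heg φ
    refine ⟨m / s, div_pos hm hs, ?_⟩
    rw [LinearEquiv.symm_apply_eq, ← real_smul (x := m / s), map_smul, he, hZ, real_smul, ofReal_div]
    field_simp [ofReal_ne_zero.mpr hs.ne']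
  shift φ E := by simpa only [hg1] using σ.shift (g φ) E
  hom_zero φ₁ φ₂ h := σ.hom_zero (g φ₁) (g φ₂) (g.strictMono h)
  HN E hE := (σ.HN E hE).map (·.comapPhase g)

lemma isSemistable_act_iff (σ : StabilityCondition C) (e : ℂ ≃ₗ[ℝ] ℂ) (g : ℝ ≃o ℝ)
    (hg1 : ∀ φ : ℝ, g (φ + 1) = g φ + 1) (heg : MapsRays e g) (E : C) :
    (σ.act e g hg1 heg).IsSemistable C E ↔ σ.IsSemistable C E := by
  refine ⟨fun ⟨hE, φ, hφ⟩ => ⟨hE, g φ, hφ⟩, fun ⟨hE, ψ, hψ⟩ => ⟨hE, g.symm ψ, ?_⟩⟩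
  show E ∈ σ.P (g (g.symm ψ))
  rwa [g.apply_symm_apply]

end StabilityCondition

end

theorem stabilityCondition_of_tildeGL (σ : StabilityCondition C)
    (T : ℂ →ₗ[ℝ] ℂ) (hTbij : Function.Bijective T)
    (f : ℝ → ℝ) (hf : Monotone f) (hf1 : ∀ φ : ℝ, f (φ + 1) = f φ + 1)
    (hTf : ∀ φ : ℝ, ∃ s : ℝ, 0 < s ∧
      T (Complex.exp (Real.pi * φ * Complex.I)) =
        s * Complex.exp (Real.pi * (f φ) * Complex.I)) :
    ∃ τ : StabilityCondition C,
      (∀ E : C, T (τ.Z E) = σ.Z E) ∧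
      (∀ φ : ℝ, τ.P φ = σ.P (f φ)) ∧
      (∀ E : C, τ.IsSemistable C E ↔ σ.IsSemistable C E) := by
  let F : CircleDeg1Lift := ⟨⟨f, hf⟩, hf1⟩
  have hFinj := F.injective_of_mapsRays hTbij.1 hTf
  have hFsurj := F.surjective_of_mapsRays hTbij.2 hTf
  let g := StrictMono.orderIsoOfSurjective F (F.monotone.strictMono_of_injective hFinj) hFsurj
  let e := LinearEquiv.ofBijective T hTbij
  exact ⟨σ.act e g hf1 hTf, fun E => e.apply_symm_apply (σ.Z E), fun _ => rfl,
    σ.isSemistable_act_iff e g hf1 hTf⟩
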